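/- arXiv:2402.05393 — 12 statements merged into one kernel-verified Lean document; each statement's English description precedes it below -/
import Mathlib

section
/- Let (τ_L, τ_R) ∈ R_0 with τ_L ≥ 1 (so in particular τ_R < −1 and φ₀(τ_L, τ_R) > 0). Then the skew tent map s_{τ_L,τ_R} maps the interval [τ_R + 1, 1] onto itself: the image s_{τ_L,τ_R}([τ_R + 1, 1]) equals [τ_R + 1, 1]. -/
noncomputable section

/-- Parameters ξ = (τL, δL, τR, δR) of the 2D border-collision normal form. -/
structure Param where
  tL : ℝ
  dL : ℝ
  tR : ℝ
  dR : ℝ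

/-- The region Φ where the BCNF has two saddle fixed points. -/
def Phi (ξ : Param) : Prop := |ξ.dL + 1| < ξ.tL ∧ ξ.tR < -|ξ.dR + 1|

/-- The 2D border-collision normal form map. -/
def fBC (ξ : Param) (p : ℝ × ℝ) : ℝ × ℝ :=
  if p.1 ≤ 0 then (ξ.tL * p.1 + p.2 + 1, -ξ.dL * p.1)
  else (ξ.tR * p.1 + p.2 + 1, -ξ.dR * p.1)

def lamLu (ξ : Param) : ℝ := (ξ.tL + Real.sqrt (ξ.tL^2 - 4*ξ.dL)) / 2
def lamLs (ξ : Param) : ℝ := (ξ.tL - Real.sqrt (ξ.tL^2 - 4*ξ.dL)) / 2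
def lamRu (ξ : Param) : ℝ := (ξ.tR - Real.sqrt (ξ.tR^2 - 4*ξ.dR)) / 2
def lamRs (ξ : Param) : ℝ := (ξ.tR + Real.sqrt (ξ.tR^2 - 4*ξ.dR)) / 2

/-- The renormalisation operator g. -/
def gmap (ξ : Param) : Param :=
  ⟨ξ.tR^2 - 2*ξ.dR, ξ.dR^2, ξ.tL*ξ.tR - ξ.dL - ξ.dR, ξ.dL*ξ.dR⟩

def alphaF (ξ : Param) : ℝ := ξ.tL*ξ.tR + (ξ.dL - 1)*(ξ.dR - 1)

def phiPlus (ξ : Param) : ℝ :=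
  ξ.dR - (ξ.tR + ξ.dL + ξ.dR - (1 + ξ.tR) * lamLu ξ) * lamLu ξ

def phiMinus (ξ : Param) : ℝ :=
  ξ.dR - (ξ.dR + ξ.tR - (1 + lamRu ξ) * lamLu ξ) * lamLu ξ

def phiMin (ξ : Param) : ℝ := min (phiPlus ξ) (phiMinus ξ)

/-- The skew tent map with parameters (a, b). -/
def stm (a b x : ℝ) : ℝ := if x ≤ 0 then a*x + 1 else b*x + 1

/-- The set of points mapping into the right half-plane. -/
def PiSet (ξ : Param) : Set (ℝ × ℝ) := {p | 0 ≤ (fBC ξ p).1}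

/-- The conjugating affine change of coordinates h_ξ. -/
def hMap (ξ : Param) (p : ℝ × ℝ) : ℝ × ℝ :=
  (p.1 / (ξ.tR + ξ.dR + 1), (ξ.dR * p.1 + ξ.tR * p.2 - ξ.dR) / (ξ.tR + ξ.dR + 1))

def Rset1 (n : ℕ) : Set Param :=
  {ξ | Phi ξ ∧ 0 < ξ.dL ∧ 0 < ξ.dR ∧ 0 < phiPlus (gmap^[n] ξ) ∧ phiPlus (gmap^[n+1] ξ) ≤ 0}

def Rset2 (n : ℕ) : Set Param :=
  {ξ | Phi ξ ∧ ξ.dL < 0 ∧ ξ.dR < 0 ∧ 0 < phiPlus (gmap^[n] ξ) ∧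
    phiPlus (gmap^[n+1] ξ) ≤ 0 ∧ alphaF ξ < 0}

def Rset3 (n : ℕ) : Set Param :=
  {ξ | Phi ξ ∧ 0 < ξ.dL ∧ ξ.dR < 0 ∧ 0 < phiMin (gmap^[n] ξ) ∧
    phiMin (gmap^[n+1] ξ) ≤ 0 ∧ alphaF ξ < 0}

def Rset4 (n : ℕ) : Set Param :=
  {ξ | Phi ξ ∧ ξ.dL < 0 ∧ 0 < ξ.dR ∧ 0 < phiMin (gmap^[n] ξ) ∧
    phiMin (gmap^[n+1] ξ) ≤ 0 ∧ alphaF ξ < 0 ∧ alphaF (gmap ξ) < 0}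

/-- Renormalisation operator for skew tent maps. -/
def g0 (p : ℝ × ℝ) : ℝ × ℝ := (p.2^2, p.1*p.2)
def phi0 (p : ℝ × ℝ) : ℝ := p.1*p.2 + p.1 - p.2
def alpha0 (p : ℝ × ℝ) : ℝ := p.1*p.2 + 1

/-- The regions R_n of skew tent map parameter space. -/
def RsetST (n : ℕ) : Set (ℝ × ℝ) :=
  {p | p.2 < -1 ∧ 0 < phi0 (g0^[n] p) ∧ phi0 (g0^[n+1] p) ≤ 0 ∧ alpha0 p < 0}

theorem stmt_1 (p : ℝ × ℝ) (hp : p ∈ RsetST 0) (h1 : 1 ≤ p.1) :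
    stm p.1 p.2 '' Set.Icc (p.2 + 1) 1 = Set.Icc (p.2 + 1) 1 := by
  obtain ⟨hb, hφ, -, -⟩ := hp
  simp only [Function.iterate_zero, id] at hφ
  unfold phi0 at hφ
  have hbneg : p.2 < 0 := by linarith
  ext y
  simp only [Set.mem_image, Set.mem_Icc]
  constructor
  · rintro ⟨x, ⟨hx1, hx2⟩, rfl⟩
    unfold stm
    split_ifs with h
    · constructor
      · nlinarith
      · nlinarith
    · push_neg at h
      constructor
      · nlinarith
      · nlinarith
  · rintro ⟨hy1, hy2⟩
    rcases eq_or_lt_of_le hy2 with hy | hy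
    · exact ⟨0, ⟨by linarith, by linarith⟩, by simp [stm, hy]⟩
    · refine ⟨(y - 1) / p.2, ⟨?_, ?_⟩, ?_⟩
      · have : 0 < (y - 1) / p.2 := div_pos_of_neg_of_neg (by linarith) hbneg
        linarith
      · rw [div_le_iff_of_neg hbneg]; linarith
      · have hx : ¬ (y - 1) / p.2 ≤ 0 := by
          have : 0 < (y - 1) / p.2 := div_pos_of_neg_of_neg (by linarith) hbneg
          linarith
        rw [stm, if_neg hx]
        rw [mul_div_cancel₀ _ (by linarith : p.2 ≠ 0)]
        ring
end
end

section
/- If n ≥ 1 and (τ_L, τ_R) ∈ R_n, then g₀(τ_L, τ_R) ∈ R_{n−1}. -/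
noncomputable section

theorem stmt_3 (n : ℕ) (hn : 1 ≤ n) (p : ℝ × ℝ) (hp : p ∈ RsetST n) :
    g0 p ∈ RsetST (n - 1) := by
  obtain ⟨h1, h2, h3, h4⟩ := hp
  have hiter : ∀ k : ℕ, g0^[k] (g0 p) = g0^[k+1] p := by
    intro k; rw [Function.iterate_succ_apply]
  have hn1 : n - 1 + 1 = n := Nat.succ_pred_eq_of_pos hn
  refine ⟨?_, ?_, ?_, ?_⟩
  · show (g0 p).2 < -1
    simp only [alpha0] at h4
    simp only [g0]
    linarith
  · show 0 < phi0 (g0^[n-1] (g0 p))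
    rw [hiter, hn1]; exact h2
  · show phi0 (g0^[n-1+1] (g0 p)) ≤ 0
    rw [hiter, hn1]; exact h3
  · show alpha0 (g0 p) < 0
    simp only [alpha0, g0]
    have ha : p.1 * p.2 < -1 := by simp [alpha0] at h4; linarith
    have hb : 1 < p.2 ^ 2 := by nlinarith
    nlinarith
end
end

section
/- Let ξ ∈ Φ with δ_L·δ_R < 1 and α(ξ) > 0. Write τ̃_R = τ_L·τ_R − δ_L − δ_R and δ̃_R = δ_L·δ_R, and define P = (−1/(τ̃_R − δ̃_R − 1))·(τ_R + δ_R + 1, −δ_R·(τ_L + δ_L + 1)) and Q = (−1/(τ̃_R − δ̃_R − 1))·(τ_L + δ_L + 1, −δ_L·(τ_R + δ_R + 1)). Then τ̃_R − δ̃_R − 1 < 0, the first coordinates satisfy P₁ < 0 < Q₁, f_ξ(P) = Q and f_ξ(Q) = P, and every complex eigenvalue of the matrix product A_L·A_R has modulus strictly less than 1; hence {P, Q} is an asymptotically stable period-two orbit of f_ξ with symbolic itinerary LR. -/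
noncomputable section

/-! The point `P` lies in the left half-plane and `Q` in the right one, so the orbit equations
`f_L(P) = Q`, `f_R(Q) = P` are linear, and the normalising factor `c` is chosen exactly so that
they hold. The Jacobian of the second iterate along the orbit is `A_L A_R`, with trace
`τ̃_R = τ_L τ_R - δ_L - δ_R` and determinant `δ̃_R = δ_L δ_R`. By the Schur–Cohn (Jury)
conditions both eigenvalues lie in the open unit disc iff `|τ̃_R| < 1 + δ̃_R` and `δ̃_R < 1`;
here `1 - τ̃_R + δ̃_R = (1 + δ_L)(1 + δ_R) - τ_L τ_R > 0` holds on `Φ`, and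
`1 + τ̃_R + δ̃_R = α(ξ) > 0`. -/

lemma Real.sq_lt_one_of_sq_sub_mul_add_eq_zero {T D r : ℝ} (hT : |T| < 1 + D) (hD : D < 1)
    (h : r ^ 2 - T * r + D = 0) : r ^ 2 < 1 := by
  have h₁ : 0 < 1 - T + D := by linarith [le_abs_self T]
  have h₂ : 0 < 1 + T + D := by linarith [neg_abs_le T]
  nlinarith [mul_nonneg h₁.le (sq_nonneg (1 + r)), mul_nonneg h₂.le (sq_nonneg (1 - r)),
    mul_pos h₁ h₂, sq_nonneg (1 + r), sq_nonneg (1 - r)]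

lemma Complex.norm_lt_one_of_sq_sub_mul_add_eq_zero {T D : ℝ} {μ : ℂ} (hT : |T| < 1 + D)
    (hD : D < 1) (h : μ ^ 2 - T * μ + D = 0) : ‖μ‖ < 1 := by
  have hre : μ.re ^ 2 - μ.im ^ 2 - T * μ.re + D = 0 := by
    simpa [sq] using congrArg Complex.re h
  have him : μ.im * (2 * μ.re - T) = 0 := by
    linear_combination (by simpa [sq] using congrArg Complex.im h : _ = _)
  suffices μ.re ^ 2 + μ.im ^ 2 < 1 by
    rw [← sq_lt_one_iff₀ (norm_nonneg μ), Complex.sq_norm, Complex.normSq_apply]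
    nlinarith
  rcases mul_eq_zero.mp him with him | hre'
  · rw [him] at hre ⊢
    simpa using Real.sq_lt_one_of_sq_sub_mul_add_eq_zero hT hD (by linarith)
  -- a non-real root has its conjugate as the other root, so `‖μ‖ ^ 2 = D`
  · have hnorm : μ.re ^ 2 + μ.im ^ 2 = D := by linear_combination μ.re * hre' - hre
    linarith

lemma Matrix.norm_lt_one_of_hasEigenvalue_fin_two (M : Matrix (Fin 2) (Fin 2) ℝ)
    (htr : |M.trace| < 1 + M.det) (hdet : M.det < 1) {μ : ℂ}
    (hμ : Module.End.HasEigenvalue (Matrix.toLin' (M.map ((↑) : ℝ → ℂ))) μ) : ‖μ‖ < 1 := by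
  rw [Module.End.hasEigenvalue_iff_isRoot_charpoly, Matrix.charpoly_toLin',
    Matrix.charpoly_fin_two] at hμ
  refine Complex.norm_lt_one_of_sq_sub_mul_add_eq_zero htr hdet ?_
  simpa [Matrix.trace_fin_two, Matrix.det_fin_two] using hμ

lemma Matrix.trace_bcnf_mul (tL dL tR dR : ℝ) :
    (!![tL, 1; -dL, 0] * !![tR, 1; -dR, 0]).trace = tL * tR - dL - dR := by
  rw [Matrix.mul_fin_two, Matrix.trace_fin_two_of]
  ring

lemma Matrix.det_bcnf_mul (tL dL tR dR : ℝ) :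
    (!![tL, 1; -dL, 0] * !![tR, 1; -dR, 0]).det = dL * dR := by
  rw [Matrix.det_mul, Matrix.det_fin_two_of, Matrix.det_fin_two_of]
  ring

namespace Phi

variable {ξ : Param}

lemma tL_add_dL_add_one_pos (hξ : Phi ξ) : 0 < ξ.tL + ξ.dL + 1 := by
  linarith [neg_abs_le (ξ.dL + 1), hξ.1]

lemma tR_add_dR_add_one_neg (hξ : Phi ξ) : ξ.tR + ξ.dR + 1 < 0 := by
  linarith [le_abs_self (ξ.dR + 1), hξ.2]

lemma tL_mul_tR_lt (hξ : Phi ξ) : ξ.tL * ξ.tR < (ξ.dL + 1) * (ξ.dR + 1) := by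
  have h : |ξ.dL + 1| * |ξ.dR + 1| < ξ.tL * -ξ.tR :=
    mul_lt_mul'' hξ.1 (by linarith [hξ.2]) (abs_nonneg _) (abs_nonneg _)
  linarith [abs_mul (ξ.dL + 1) (ξ.dR + 1) ▸ neg_abs_le ((ξ.dL + 1) * (ξ.dR + 1))]

end Phi

lemma fBC_of_nonpos (ξ : Param) {p : ℝ × ℝ} (hp : p.1 ≤ 0) :
    fBC ξ p = (ξ.tL * p.1 + p.2 + 1, -ξ.dL * p.1) :=
  if_pos hp

lemma fBC_of_pos (ξ : Param) {p : ℝ × ℝ} (hp : 0 < p.1) :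
    fBC ξ p = (ξ.tR * p.1 + p.2 + 1, -ξ.dR * p.1) :=
  if_neg hp.not_ge

theorem stmt_4 (ξ : Param) (hξ : Phi ξ) (hdet : ξ.dL * ξ.dR < 1) (hα : 0 < alphaF ξ)
    (AL AR : Matrix (Fin 2) (Fin 2) ℝ)
    (hAL : AL = !![ξ.tL, 1; -ξ.dL, 0]) (hAR : AR = !![ξ.tR, 1; -ξ.dR, 0])
    (c : ℝ) (hc : c = -1 / (ξ.tL*ξ.tR - ξ.dL - ξ.dR - ξ.dL*ξ.dR - 1))
    (P Q : ℝ × ℝ)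
    (hP : P = (c * (ξ.tR + ξ.dR + 1), c * (-ξ.dR * (ξ.tL + ξ.dL + 1))))
    (hQ : Q = (c * (ξ.tL + ξ.dL + 1), c * (-ξ.dL * (ξ.tR + ξ.dR + 1)))) :
    ξ.tL*ξ.tR - ξ.dL - ξ.dR - ξ.dL*ξ.dR - 1 < 0 ∧
    P.1 < 0 ∧ 0 < Q.1 ∧ fBC ξ P = Q ∧ fBC ξ Q = P ∧
    ∀ μ : ℂ,
      Module.End.HasEigenvalue
        (Matrix.toLin' ((AL * AR).map (fun a => (a : ℂ))) : Module.End ℂ (Fin 2 → ℂ)) μ →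
      ‖μ‖ < 1 := by
  have hD : ξ.tL*ξ.tR - ξ.dL - ξ.dR - ξ.dL*ξ.dR - 1 < 0 := by linarith [hξ.tL_mul_tR_lt]
  have hc_pos : 0 < c := hc ▸ div_pos_of_neg_of_neg (by norm_num) hD
  have hcD : c * (ξ.tL*ξ.tR - ξ.dL - ξ.dR - ξ.dL*ξ.dR - 1) = -1 := by
    rw [hc, div_mul_cancel₀ _ hD.ne]
  have hP₁ : P.1 < 0 := hP ▸ mul_neg_of_pos_of_neg hc_pos hξ.tR_add_dR_add_one_neg
  have hQ₁ : 0 < Q.1 := hQ ▸ mul_pos hc_pos hξ.tL_add_dL_add_one_pos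
  refine ⟨hD, hP₁, hQ₁, ?_, ?_, fun μ hμ => ?_⟩
  · rw [fBC_of_nonpos ξ hP₁.le, hP, hQ, Prod.ext_iff]
    exact ⟨by linear_combination hcD, by ring⟩
  · rw [fBC_of_pos ξ hQ₁, hP, hQ, Prod.ext_iff]
    exact ⟨by linear_combination hcD, by ring⟩
  · subst hAL hAR
    refine Matrix.norm_lt_one_of_hasEigenvalue_fin_two _ ?_ ?_ hμ
    · rw [Matrix.trace_bcnf_mul, Matrix.det_bcnf_mul, abs_lt]
      unfold alphaF at hα
      constructor <;> linarith
    · rwa [Matrix.det_bcnf_mul]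
end
end

section
/- If ξ ∈ Φ and δ_L + δ_R ≥ 0, then α(ξ) < 0. -/
noncomputable section

theorem stmt_5 (ξ : Param) (hξ : Phi ξ) (h : 0 ≤ ξ.dL + ξ.dR) : alphaF ξ < 0 := by
  obtain ⟨hL, hR⟩ := hξ
  have haL : (0:ℝ) ≤ |ξ.dL + 1| := abs_nonneg _
  have haR : (0:ℝ) ≤ |ξ.dR + 1| := abs_nonneg _
  have h1 : (ξ.dL + 1) * (ξ.dR + 1) ≤ |ξ.dL + 1| * |ξ.dR + 1| := by
    rw [← abs_mul]; exact le_abs_self _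
  have htL : 0 < ξ.tL := lt_of_le_of_lt haL hL
  have h2 : ξ.tL * ξ.tR < ξ.tL * (-|ξ.dR + 1|) := by
    exact (mul_lt_mul_iff_right₀ htL).mpr hR
  have h3 : ξ.tL * (-|ξ.dR + 1|) ≤ |ξ.dL + 1| * (-|ξ.dR + 1|) := by
    apply mul_le_mul_of_nonpos_right hL.le
    linarith
  unfold alphaF
  nlinarith [h1, h2, h3]
end
end

section
/- If ξ ∈ Φ and α(ξ) < 0, then g(ξ) ∈ Φ. -/
noncomputable section

theorem stmt_6 (ξ : Param) (hξ : Phi ξ) (h : alphaF ξ < 0) : Phi (gmap ξ) := by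
  obtain ⟨h1, h2⟩ := hξ
  have hL := abs_lt.mp h1
  have hR : |ξ.dR + 1| < -ξ.tR := by linarith [abs_nonneg (ξ.dR + 1)]
  have hR' := abs_lt.mp hR
  have htL : 0 < ξ.tL := lt_of_le_of_lt (abs_nonneg _) h1
  have htR : ξ.tR < 0 := by linarith [abs_nonneg (ξ.dR + 1)]
  unfold alphaF at h
  rw [Phi]
  simp only [gmap]
  constructor
  · rw [abs_of_pos (by positivity)]
    nlinarith [hR'.1, hR'.2]
  · rcases le_or_gt 0 (ξ.dL * ξ.dR + 1) with hc | hc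
    · rw [abs_of_nonneg hc]; show _ < _; nlinarith
    · rw [abs_of_neg hc]; show _ < _
      rcases lt_trichotomy (ξ.dR + 1) 0 with h3 | h3 | h3
      · nlinarith [hL.1, hL.2, hR'.1, hR'.2]
      · nlinarith [hL.1, hL.2]
      · nlinarith [hL.1, hL.2, hR'.1, hR'.2]
end
end

section
/- Let ξ ∈ Φ (so in particular τ_R + δ_R + 1 < 0, and h_ξ is well defined). Then for every point p ∈ Π_ξ, h_ξ(f_ξ(f_ξ(p))) = f_{g(ξ)}(h_ξ(p)); that is, on Π_ξ the second iterate f_ξ² is conjugate via h_ξ to the border-collision normal form map with parameter g(ξ). -/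
noncomputable section

theorem stmt_8 (ξ : Param) (hξ : Phi ξ) :
    ξ.tR + ξ.dR + 1 < 0 ∧
    ∀ p ∈ PiSet ξ, hMap ξ (fBC ξ (fBC ξ p)) = fBC (gmap ξ) (hMap ξ p) := by
  have hD : ξ.tR + ξ.dR + 1 < 0 := by
    have h1 := hξ.2
    have h2 : ξ.dR + 1 ≤ |ξ.dR + 1| := le_abs_self _
    linarith
  refine ⟨hD, ?_⟩
  have hDne : ξ.tR + ξ.dR + 1 ≠ 0 := ne_of_lt hD
  have fright : ∀ q : ℝ × ℝ, 0 ≤ q.1 →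
      fBC ξ q = (ξ.tR * q.1 + q.2 + 1, -ξ.dR * q.1) := by
    intro q hq
    unfold fBC
    split_ifs with h'
    · have h0 : q.1 = 0 := le_antisymm h' hq
      rw [h0]; ring_nf
    · rfl
  have gright : ∀ q : ℝ × ℝ, 0 ≤ q.1 →
      fBC (gmap ξ) q = ((gmap ξ).tR * q.1 + q.2 + 1, -(gmap ξ).dR * q.1) := by
    intro q hq
    unfold fBC
    split_ifs with h'
    · have h0 : q.1 = 0 := le_antisymm h' hq
      rw [h0]; ring_nf
    · rfl
  intro p hp
  simp only [PiSet, Set.mem_setOf_eq] at hp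
  by_cases h1 : p.1 ≤ 0
  · -- left branch first
    have e1 : fBC ξ p = (ξ.tL * p.1 + p.2 + 1, -ξ.dL * p.1) := by
      unfold fBC; rw [if_pos h1]
    rw [e1] at hp ⊢
    rw [fright _ hp]
    have hmp1 : 0 ≤ (hMap ξ p).1 := by
      simp only [hMap]
      have := div_nonneg (neg_nonneg.mpr h1) (neg_nonneg.mpr hD.le)
      rwa [neg_div_neg_eq] at this
    rw [gright _ hmp1]
    simp only [hMap, gmap, Prod.mk.injEq]
    constructor <;> (field_simp; ring)
  · -- right branch first
    push_neg at h1
    have e1 : fBC ξ p = (ξ.tR * p.1 + p.2 + 1, -ξ.dR * p.1) := by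
      unfold fBC; rw [if_neg (not_le.mpr h1)]
    rw [e1] at hp ⊢
    rw [fright _ hp]
    have hmp1 : (hMap ξ p).1 ≤ 0 := by
      simp only [hMap]
      exact div_nonpos_of_nonneg_of_nonpos (le_of_lt h1) (le_of_lt hD)
    have e2 : fBC (gmap ξ) (hMap ξ p)
        = ((gmap ξ).tL * (hMap ξ p).1 + (hMap ξ p).2 + 1, -(gmap ξ).dL * (hMap ξ p).1) := by
      unfold fBC; rw [if_pos hmp1]
    rw [e2]
    simp only [hMap, gmap, Prod.mk.injEq]
    constructor <;> (field_simp; ring)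
end
end

section
/- If n ≥ 1 and ξ ∈ R_n^(1), then g(ξ) ∈ R_{n−1}^(1). -/
noncomputable section

theorem stmt_11 (n : ℕ) (hn : 1 ≤ n) (ξ : Param) (hξ : ξ ∈ Rset1 n) :
    gmap ξ ∈ Rset1 (n - 1) := by
  obtain ⟨⟨h1, h2⟩, hdL, hdR, hφ1, hφ2⟩ := hξ
  have habs1 := abs_lt.mp h1
  have h2' : ξ.tR < -(ξ.dR + 1) := by
    have := abs_nonneg (ξ.dR + 1)
    have : |ξ.dR + 1| = ξ.dR + 1 := abs_of_nonneg (by linarith)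
    linarith [this ▸ h2]
  have h1' : ξ.dL + 1 < ξ.tL := habs1.2
  have hiter1 : gmap^[n - 1] (gmap ξ) = gmap^[n] ξ := by
    rw [← Function.iterate_succ_apply, Nat.succ_eq_add_one, Nat.sub_add_cancel hn]
  have hiter2 : gmap^[n - 1 + 1] (gmap ξ) = gmap^[n + 1] ξ := by
    rw [← Function.iterate_succ_apply, Nat.succ_eq_add_one, Nat.sub_add_cancel hn,
      Function.iterate_succ_apply]
  refine ⟨⟨?_, ?_⟩, ?_, ?_, ?_, ?_⟩
  · show |ξ.dR^2 + 1| < ξ.tR^2 - 2*ξ.dR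
    rw [abs_of_nonneg (by positivity)]
    nlinarith [sq_nonneg (ξ.tR + ξ.dR + 1)]
  · show ξ.tL*ξ.tR - ξ.dL - ξ.dR < -|ξ.dL*ξ.dR + 1|
    rw [abs_of_nonneg (by positivity)]
    nlinarith [mul_pos hdL hdR, mul_lt_mul_of_pos_left h2' (show (0:ℝ) < ξ.tL by linarith)]
  · show (0:ℝ) < ξ.dR^2
    positivity
  · show (0:ℝ) < ξ.dL*ξ.dR
    positivity
  · rw [hiter1]; exact hφ1
  · rw [hiter2]; exact hφ2
end
end

section
/- Let (M, d) be a metric space, let f : M → M be continuous, and let Ψ ⊆ M be a compact set with f(Ψ) = Ψ. Suppose Ψ has exactly k connected components for some integer k ≥ 2, and suppose there exists P ∈ Ψ such that for every connected component C of Ψ there is an integer n ≥ 0 with f^n(P) ∈ C. Then the components can be labelled Ψ_1, Ψ_2, …, Ψ_k such that f(Ψ_1) = Ψ_2, f(Ψ_2) = Ψ_3, …, f(Ψ_{k−1}) = Ψ_k, and f(Ψ_k) = Ψ_1; equivalently, there is a bijection e from ℤ/kℤ to the set of connected components of Ψ such that f(e(i)) = e(i+1) for every i. -/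
noncomputable section

private lemma cycle_lemma {S : Type*} [Finite S] (F : S → S) (hF : Function.Bijective F)
    (C₀ : S) (horb : ∀ C : S, ∃ n : ℕ, F^[n] C₀ = C) {k : ℕ} (hk : 2 ≤ k)
    (hcard : Nat.card S = k) :
    ∃ e : ZMod k ≃ S, ∀ i : ZMod k, F (e i) = e (i + 1) := by
  classical
  haveI : NeZero k := ⟨by omega⟩
  have hex : ∃ p, 0 < p ∧ F^[p] C₀ = C₀ := by
    obtain ⟨a, b, hne, heq⟩ := Finite.exists_ne_map_eq_of_infinite (fun n : ℕ => F^[n] C₀)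
    rcases lt_or_gt_of_ne hne with hab | hab
    · refine ⟨b - a, by omega, (hF.1.iterate a) ?_⟩
      rw [← Function.iterate_add_apply, show a + (b - a) = b by omega]
      exact heq.symm
    · refine ⟨a - b, by omega, (hF.1.iterate b) ?_⟩
      rw [← Function.iterate_add_apply, show b + (a - b) = a by omega]
      exact heq
  set p := Nat.find hex with hp
  obtain ⟨hppos, hpfix⟩ : 0 < p ∧ F^[p] C₀ = C₀ := Nat.find_spec hex
  have hmul : ∀ q, F^[p * q] C₀ = C₀ := by
    intro q; induction q with
    | zero => simp
    | succ q ih =>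
      rw [Nat.mul_succ, Function.iterate_add_apply, hpfix, ih]
  have hmod : ∀ n, F^[n] C₀ = F^[n % p] C₀ := by
    intro n
    conv_lhs => rw [← Nat.mod_add_div n p]
    rw [Function.iterate_add_apply, hmul]
  have hinj_lt : ∀ i j, i < p → j < p → F^[i] C₀ = F^[j] C₀ → i = j := by
    have key : ∀ i j, i ≤ j → j < p → F^[i] C₀ = F^[j] C₀ → i = j := by
      intro i j hij hjp heq
      by_contra hne
      have h1 : F^[i] (F^[j - i] C₀) = F^[i] C₀ := by
        rw [← Function.iterate_add_apply, show i + (j - i) = j by omega]; exact heq.symm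
      have h2 : F^[j - i] C₀ = C₀ := hF.1.iterate i h1
      exact Nat.find_min hex (show j - i < p by omega) ⟨by omega, h2⟩
    intro i j hi hj heq
    rcases le_or_gt i j with h | h
    · exact key i j h hj heq
    · exact (key j i h.le hi heq.symm).symm
  have hbij : Function.Bijective (fun i : Fin p => F^[(i : ℕ)] C₀) := by
    constructor
    · intro i j hij
      exact Fin.ext (hinj_lt i j i.2 j.2 hij)
    · intro C
      obtain ⟨n, hn⟩ := horb C
      exact ⟨⟨n % p, Nat.mod_lt _ hppos⟩, by show F^[n % p] C₀ = C; rw [← hmod n]; exact hn⟩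
  have hpk : p = k := by
    rw [← hcard, ← Nat.card_eq_of_bijective _ hbij, Nat.card_eq_fintype_card, Fintype.card_fin]
  have hbij' : Function.Bijective (fun i : ZMod k => F^[(ZMod.val i)] C₀) := by
    constructor
    · intro i j hij
      exact ZMod.val_injective k
        (hinj_lt _ _ (hpk ▸ ZMod.val_lt i) (hpk ▸ ZMod.val_lt j) hij)
    · intro C
      obtain ⟨n, hn⟩ := horb C
      refine ⟨(n : ZMod k), ?_⟩
      simp only [ZMod.val_natCast]
      rw [← hpk, ← hmod n]; exact hn
  refine ⟨Equiv.ofBijective _ hbij', fun i => ?_⟩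
  simp only [Equiv.ofBijective_apply]
  rw [← Function.iterate_succ_apply' F]
  rw [hmod (ZMod.val i + 1), hmod (ZMod.val (i + 1)), hpk]
  congr 1
  have h1 : (1 : ZMod k).val = 1 := by
    rw [ZMod.val_one_eq_one_mod]; exact Nat.mod_eq_of_lt (by omega)
  rw [ZMod.val_add, h1]
  exact (Nat.mod_mod_of_dvd _ dvd_rfl).symm

theorem stmt_12 {M : Type*} [MetricSpace M] (f : M → M) (hf : Continuous f)
    (Ψ : Set M) (hcomp : IsCompact Ψ) (hinv : f '' Ψ = Ψ)
    (k : ℕ) (hk : 2 ≤ k)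
    (hcount : Nat.card {C : Set M // ∃ x ∈ Ψ, C = connectedComponentIn Ψ x} = k)
    (P : M) (hP : P ∈ Ψ)
    (horbit : ∀ C : Set M, (∃ x ∈ Ψ, C = connectedComponentIn Ψ x) →
      ∃ n : ℕ, f^[n] P ∈ C) :
    ∃ e : ZMod k ≃ {C : Set M // ∃ x ∈ Ψ, C = connectedComponentIn Ψ x},
      ∀ i : ZMod k, f '' (e i : Set M) = (e (i + 1) : Set M) := by
  classical
  have hmem : ∀ x ∈ Ψ, f x ∈ Ψ := fun x hx => hinv ▸ ⟨x, hx, rfl⟩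
  haveI hfin : Finite {C : Set M // ∃ x ∈ Ψ, C = connectedComponentIn Ψ x} :=
    Nat.finite_of_card_ne_zero (by rw [hcount]; omega)
  have himg : ∀ x ∈ Ψ, f '' connectedComponentIn Ψ x ⊆ connectedComponentIn Ψ (f x) := by
    intro x hx
    have := hf.image_connectedComponentIn_subset hx
    rwa [hinv] at this
  have key : ∀ (x y : M), x ∈ Ψ → y ∈ Ψ →
      connectedComponentIn Ψ x = connectedComponentIn Ψ y →
      connectedComponentIn Ψ (f x) = connectedComponentIn Ψ (f y) := by
    intro x y hx hy h
    have : f y ∈ connectedComponentIn Ψ (f x) :=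
      himg x hx ⟨y, h ▸ mem_connectedComponentIn hy, rfl⟩
    exact connectedComponentIn_eq this
  obtain ⟨F, hFc⟩ : ∃ F : {C : Set M // ∃ x ∈ Ψ, C = connectedComponentIn Ψ x} →
      {C : Set M // ∃ x ∈ Ψ, C = connectedComponentIn Ψ x},
      ∀ (x : M) (hx : x ∈ Ψ),
        F ⟨connectedComponentIn Ψ x, x, hx, rfl⟩
          = ⟨connectedComponentIn Ψ (f x), f x, hmem x hx, rfl⟩ := by
    refine ⟨fun C => ⟨connectedComponentIn Ψ (f C.2.choose), f C.2.choose,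
      hmem _ C.2.choose_spec.1, rfl⟩, ?_⟩
    intro x hx
    apply Subtype.ext
    exact key _ x
      (Exists.choose_spec (⟨x, hx, rfl⟩ : ∃ z ∈ Ψ,
        connectedComponentIn Ψ x = connectedComponentIn Ψ z)).1 hx
      (Exists.choose_spec (⟨x, hx, rfl⟩ : ∃ z ∈ Ψ,
        connectedComponentIn Ψ x = connectedComponentIn Ψ z)).2.symm
  have hFsurj : Function.Surjective F := by
    intro C
    obtain ⟨x, hx, hCx⟩ := C.2
    have hx' : x ∈ f '' Ψ := hinv.symm ▸ hx
    obtain ⟨y, hy, hyx⟩ := hx'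
    refine ⟨⟨connectedComponentIn Ψ y, y, hy, rfl⟩, ?_⟩
    rw [hFc y hy]
    refine Subtype.ext ?_
    show connectedComponentIn Ψ (f y) = (C : Set M)
    rw [hyx]; exact hCx.symm
  have hFinj : Function.Injective F := Finite.injective_iff_surjective.mpr hFsurj
  have hFim : ∀ C : {C : Set M // ∃ x ∈ Ψ, C = connectedComponentIn Ψ x},
      f '' (C : Set M) = ((F C) : Set M) := by
    intro C
    obtain ⟨x, hx, hCx⟩ := C.2
    have hCeq : C = ⟨connectedComponentIn Ψ x, x, hx, rfl⟩ := Subtype.ext hCx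
    rw [hCeq, hFc x hx]
    apply subset_antisymm
    · exact himg x hx
    · intro z hz
      have hzΨ : z ∈ Ψ := connectedComponentIn_subset _ _ hz
      have hz' : z ∈ f '' Ψ := hinv.symm ▸ hzΨ
      obtain ⟨w, hw, hwz⟩ := hz'
      have h1 : connectedComponentIn Ψ z = connectedComponentIn Ψ (f x) :=
        (connectedComponentIn_eq hz).symm
      have h2 : F ⟨connectedComponentIn Ψ w, w, hw, rfl⟩
          = F ⟨connectedComponentIn Ψ x, x, hx, rfl⟩ := by
        rw [hFc w hw, hFc x hx]
        refine Subtype.ext ?_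
        show connectedComponentIn Ψ (f w) = connectedComponentIn Ψ (f x)
        rw [hwz]; exact h1
      have h3 := hFinj h2
      have h4 : w ∈ connectedComponentIn Ψ x := by
        have h5 : connectedComponentIn Ψ w = connectedComponentIn Ψ x :=
          congrArg Subtype.val h3
        rw [← h5]; exact mem_connectedComponentIn hw
      exact ⟨w, h4, hwz⟩
  have hPn : ∀ n, f^[n] P ∈ Ψ := by
    intro n; induction n with
    | zero => exact hP
    | succ n ih => rw [Function.iterate_succ_apply']; exact hmem _ ih
  have hiter : ∀ n, F^[n] ⟨connectedComponentIn Ψ P, P, hP, rfl⟩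
      = ⟨connectedComponentIn Ψ (f^[n] P), f^[n] P, hPn n, rfl⟩ := by
    intro n; induction n with
    | zero => rfl
    | succ n ih =>
      rw [Function.iterate_succ_apply', ih, hFc _ (hPn n)]
      refine Subtype.ext ?_
      show connectedComponentIn Ψ (f (f^[n] P)) = connectedComponentIn Ψ (f^[n+1] P)
      rw [Function.iterate_succ_apply' f]
  have horb' : ∀ C : {C : Set M // ∃ x ∈ Ψ, C = connectedComponentIn Ψ x},
      ∃ n, F^[n] ⟨connectedComponentIn Ψ P, P, hP, rfl⟩ = C := by
    intro C
    obtain ⟨n, hn⟩ := horbit C.1 C.2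
    refine ⟨n, ?_⟩
    rw [hiter n]
    obtain ⟨x, hx, hCx⟩ := C.2
    have : connectedComponentIn Ψ (f^[n] P) = C.1 := by
      rw [hCx] at hn ⊢
      exact (connectedComponentIn_eq hn).symm
    exact Subtype.ext this
  obtain ⟨e, he⟩ := cycle_lemma F ⟨hFinj, hFsurj⟩ _ horb' hk hcount
  refine ⟨e, fun i => ?_⟩
  rw [hFim (e i), he i]
end
end

section
/- If n ≥ 1 and ξ ∈ R_n^(2), then g(ξ) ∈ R_{n−1}^(1). -/
noncomputable section

theorem stmt_13 (n : ℕ) (hn : 1 ≤ n) (ξ : Param) (hξ : ξ ∈ Rset2 n) :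
    gmap ξ ∈ Rset1 (n - 1) := by
  obtain ⟨⟨h1, h2⟩, hdL, hdR, hφ, hφ', hα⟩ := hξ
  obtain ⟨m, rfl⟩ := Nat.exists_eq_add_of_le hn
  have habs1 : |ξ.dR + 1| ≤ -ξ.tR := le_of_lt (by linarith [h2])
  have h2' : |ξ.dR + 1| < -ξ.tR := by linarith [h2]
  have hsq : (ξ.dR + 1)^2 < ξ.tR^2 := by
    have := abs_nonneg (ξ.dR + 1)
    nlinarith [sq_abs (ξ.dR + 1)]
  refine ⟨⟨?_, ?_⟩, ?_, ?_, ?_, ?_⟩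
  · -- |dR^2 + 1| < tR^2 - 2 dR
    show |ξ.dR^2 + 1| < ξ.tR^2 - 2*ξ.dR
    rw [abs_of_pos (by positivity)]
    nlinarith
  · -- tL*tR - dL - dR < -|dL*dR + 1|
    show ξ.tL*ξ.tR - ξ.dL - ξ.dR < -|ξ.dL*ξ.dR + 1|
    have hpos : (0:ℝ) < ξ.dL*ξ.dR := mul_pos_of_neg_of_neg hdL hdR
    rw [abs_of_pos (by linarith)]
    simp only [alphaF] at hα
    nlinarith
  · show (0:ℝ) < ξ.dR^2
    nlinarith
  · exact mul_pos_of_neg_of_neg hdL hdR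
  · have e : gmap^[1 + m - 1] (gmap ξ) = gmap^[1 + m] ξ := by
      rw [← Function.iterate_succ_apply]; congr 1; omega
    rw [e]; exact hφ
  · have e : gmap^[1 + m - 1 + 1] (gmap ξ) = gmap^[1 + m + 1] ξ := by
      rw [← Function.iterate_succ_apply]; congr 1; omega
    rw [e]; exact hφ'
end
end

section
/- If n ≥ 1 and ξ ∈ R_n^(3), then g(ξ) ∈ R_{n−1}^(3). -/
noncomputable section

set_option maxHeartbeats 1000000

lemma quad_nonneg (A B C u : ℝ) (hA : 0 < A) (hdisc : 0 ≤ 4*A*C - B^2) :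
    0 ≤ C - B*u + A*u^2 := by
  nlinarith [sq_nonneg (2*A*u - B), hA]

lemma alpha_g_neg (tL dL tR dR : ℝ) (hdL : 0 < dL) (hdR : dR < 0)
    (htL : dL + 1 < tL) (htR : tR < -|dR + 1|)
    (ha : tL*tR + (dL-1)*(dR-1) < 0) :
    (tR^2-2*dR)*(tL*tR-dL-dR) + (dR^2-1)*(dL*dR-1) < 0 := by
  have htR0 : tR < 0 := lt_of_lt_of_le htR (neg_nonpos_of_nonneg (abs_nonneg _))
  have hT : dR^2+1 < tR^2 - 2*dR := by
    have h1 : |dR+1| < -tR := by linarith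
    have h2 : (dR+1)^2 < tR^2 := by nlinarith [abs_nonneg (dR+1), sq_abs (dR+1)]
    nlinarith
  have hTpos : 0 < tR^2 - 2*dR := by nlinarith [sq_nonneg dR]
  by_cases hc : 0 ≤ dL*dR+1 ∧ dL+dR ≤ 0
  · -- K case
    obtain ⟨h1, h2⟩ := hc
    have hK : -(tR^2-2*dR)*(dL*dR+1)+(dR^2-1)*(dL*dR-1) ≤ 0 := by
      nlinarith [mul_nonneg h1 (by linarith : (0:ℝ) ≤ (tR^2-2*dR)-(dR^2+1)), mul_nonneg (neg_nonneg.mpr h2) (neg_pos.mpr hdR).le]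
    have hTa : (tR^2-2*dR) * (tL*tR + (dL-1)*(dR-1)) < 0 :=
      mul_neg_of_pos_of_neg hTpos ha
    linarith [hTa, hK]
  · -- F case
    push_neg at hc
    have hstep : (tR^2-2*dR) * tR * (tL-(dL+1)) < 0 :=
      mul_neg_of_neg_of_pos (mul_neg_of_pos_of_neg hTpos htR0) (by linarith)
    have hF : (tR^2-2*dR)*((dL+1)*tR-dL-dR)+(dR^2-1)*(dL*dR-1) ≤ 0 := by
      rcases le_or_gt 0 (dR+1) with h|h
      · -- dR ≥ -1, |dR+1| = dR+1
        have htR' : tR < -(dR+1) := by rwa [abs_of_nonneg h] at htR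
        have hdd : 0 ≤ dL + dR := by
          rcases lt_or_ge (dL*dR+1) 0 with h'|h'
          · nlinarith
          · exact (hc h').le
        have hu : 0 ≤ -(dR+1) - tR := by linarith
        have hb1 : 0 ≤ 3+6*dR+5*dR^2+dL*(5+6*dR+3*dR^2) := by
          nlinarith [sq_nonneg (5*dR+3), sq_nonneg (dR+1), hdL.le]
        have hb2 : 0 ≤ 3+4*dR+dL*(4+3*dR) := by
          nlinarith [mul_nonneg hdd (by linarith : (0:ℝ) ≤ 4+3*dR)]
        have hb3 : (0:ℝ) ≤ 1+dL := by linarith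
        linarith [mul_nonneg hu hb1, mul_nonneg (mul_nonneg hu hu) hb2,
          mul_nonneg (mul_nonneg (mul_nonneg hu hu) hu) hb3,
          mul_nonneg hdd (by nlinarith [sq_nonneg (2*dR+1)] : (0:ℝ) ≤ 1+dR+dR^2)]
      · -- dR < -1, |dR+1| = -(dR+1)
        have htR' : tR < dR+1 := by rw [abs_of_neg h] at htR; linarith
        have hm : dL*dR ≤ -1 := by
          rcases lt_or_ge (dL*dR+1) 0 with h'|h'
          · linarith
          · have h2 := hc h'
            nlinarith
        have hu : 0 ≤ (dR+1) - tR := by linarith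
        have hcube : dL*dR^3 ≤ -1 := by nlinarith [mul_nonneg (by linarith : (0:ℝ) ≤ -(dL*dR)-1) (by nlinarith : (0:ℝ) ≤ dR^2-1)]
        have hc1 : 0 < 3+2*dR+dR^2+dL*(1+2*dR+3*dR^2) := by
          nlinarith [sq_nonneg (dR+1), sq_nonneg (3*dR+1), hdL.le]
        have hdisc : 0 ≤ 4*(1+dL)*(3+2*dR+dR^2+dL*(1+2*dR+3*dR^2)) - (3+2*dR+dL*(2+3*dR))^2 := by
          have hnd : (0:ℝ) ≤ -dR := by linarith
          nlinarith [mul_nonneg hdL.le hnd, mul_nonneg hdL.le (sq_nonneg dR),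
            mul_nonneg (mul_nonneg hdL.le hdL.le) hnd,
            mul_nonneg (mul_nonneg hdL.le hdL.le) (sq_nonneg dR)]
        have hquad : 0 ≤ (3+2*dR+dR^2+dL*(1+2*dR+3*dR^2)) - (3+2*dR+dL*(2+3*dR))*((dR+1)-tR) + (1+dL)*((dR+1)-tR)^2 :=
          quad_nonneg (1+dL) _ _ _ (by linarith) hdisc
        linarith [mul_nonneg hu hquad, hcube]
    linarith [hstep, hF]


theorem stmt_14 (n : ℕ) (hn : 1 ≤ n) (ξ : Param) (hξ : ξ ∈ Rset3 n) :
    gmap ξ ∈ Rset3 (n - 1) := by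
  obtain ⟨hPhi, hdL, hdR, hp1, hp2, halpha⟩ := hξ
  obtain ⟨m, rfl⟩ : ∃ m, n = m + 1 := ⟨n - 1, (Nat.succ_pred_eq_of_pos hn).symm⟩
  obtain ⟨hPhiL, hPhiR⟩ := hPhi
  have htL : ξ.dL + 1 < ξ.tL := lt_of_le_of_lt (le_abs_self _) hPhiL
  have htR0 : ξ.tR < 0 := lt_of_lt_of_le hPhiR (neg_nonpos_of_nonneg (abs_nonneg _))
  have hT : ξ.dR^2+1 < ξ.tR^2 - 2*ξ.dR := by
    have h1 : |ξ.dR+1| < -ξ.tR := by linarith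
    have h2 : (ξ.dR+1)^2 < ξ.tR^2 := by nlinarith [abs_nonneg (ξ.dR+1), sq_abs (ξ.dR+1)]
    nlinarith
  have halpha' : ξ.tL*ξ.tR + (ξ.dL-1)*(ξ.dR-1) < 0 := halpha
  refine ⟨⟨?_, ?_⟩, ?_, ?_, ?_, ?_, ?_⟩
  · -- |dR^2+1| < tR^2-2dR
    show |ξ.dR^2 + 1| < ξ.tR^2 - 2*ξ.dR
    rw [abs_of_pos (by positivity)]
    exact hT
  · -- tL*tR-dL-dR < -|dL*dR+1|
    show ξ.tL*ξ.tR - ξ.dL - ξ.dR < -|ξ.dL*ξ.dR + 1|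
    rcases abs_cases (ξ.dL*ξ.dR + 1) with ⟨he, _⟩ | ⟨he, _⟩
    · rw [he]; linarith
    · rw [he]
      have h1 : ξ.tL * ξ.tR < (ξ.dL+1) * ξ.tR :=
        mul_lt_mul_of_neg_right htL htR0
      have h2 : ξ.tR < ξ.dR + 1 := lt_of_lt_of_le hPhiR (by
        rcases abs_cases (ξ.dR+1) with ⟨he2, _⟩ | ⟨he2, _⟩ <;> rw [he2] <;> linarith)
      have h3 : (ξ.dL+1) * ξ.tR < (ξ.dL+1) * (ξ.dR+1) :=
        mul_lt_mul_of_pos_left h2 (by linarith)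
      nlinarith
  · show (0:ℝ) < ξ.dR^2
    nlinarith [mul_pos (neg_pos.mpr hdR) (neg_pos.mpr hdR)]
  · show ξ.dL * ξ.dR < 0
    exact mul_neg_of_pos_of_neg hdL hdR
  · show 0 < phiMin (gmap^[m+1-1] (gmap ξ))
    simpa [Function.iterate_succ_apply] using hp1
  · show phiMin (gmap^[m+1-1+1] (gmap ξ)) ≤ 0
    simpa [Function.iterate_succ_apply] using hp2
  · -- alphaF (gmap ξ) < 0
    show (ξ.tR^2 - 2*ξ.dR)*(ξ.tL*ξ.tR - ξ.dL - ξ.dR) + (ξ.dR^2 - 1)*(ξ.dL*ξ.dR - 1) < 0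
    exact alpha_g_neg ξ.tL ξ.dL ξ.tR ξ.dR hdL hdR htL hPhiR halpha'
end
end

section
/- If n ≥ 1 and ξ ∈ R_n^(4), then g(ξ) ∈ R_{n−1}^(3). -/
noncomputable section

theorem stmt_16 (n : ℕ) (hn : 1 ≤ n) (ξ : Param) (hξ : ξ ∈ Rset4 n) :
    gmap ξ ∈ Rset3 (n - 1) := by

  obtain ⟨⟨h1, h2⟩, hdL, hdR, hphi1, hphi2, hal, hal2⟩ := hξ
  have hdR1 : (0:ℝ) < ξ.dR + 1 := by linarith
  have habs : |ξ.dR + 1| = ξ.dR + 1 := abs_of_pos hdR1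
  have htR : ξ.tR < -(ξ.dR + 1) := by rw [habs] at h2; exact h2
  have htL : 0 < ξ.tL := lt_of_le_of_lt (abs_nonneg _) h1
  have hiter : gmap^[n-1] (gmap ξ) = gmap^[n] ξ := by
    rw [← Function.iterate_succ_apply]; congr 1; omega
  have hiter2 : gmap^[(n-1)+1] (gmap ξ) = gmap^[n+1] ξ := by
    rw [← Function.iterate_succ_apply]; congr 1; omega
  refine ⟨⟨?_, ?_⟩, ?_, ?_, ?_, ?_, ?_⟩
  · show |ξ.dR^2 + 1| < ξ.tR^2 - 2*ξ.dR
    rw [abs_of_pos (by positivity)]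
    nlinarith
  · show ξ.tL*ξ.tR - ξ.dL - ξ.dR < -|ξ.dL*ξ.dR + 1|
    have halF : ξ.tL*ξ.tR + (ξ.dL - 1)*(ξ.dR - 1) < 0 := hal
    rcases abs_cases (ξ.dL*ξ.dR + 1) with ⟨he, _⟩ | ⟨he, _⟩
    · rw [he]; nlinarith
    · rw [he]
      have h1' : |ξ.dL + 1| < ξ.tL := h1
      have : -(ξ.dL + 1) ≤ |ξ.dL + 1| := neg_le_abs _
      have hmul : |ξ.dL + 1| * (ξ.dR + 1) < ξ.tL * (-ξ.tR) := by
        apply mul_lt_mul' (le_of_lt h1') (by linarith) (by linarith) htL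
      nlinarith [abs_nonneg (ξ.dL + 1)]
  · show (0:ℝ) < ξ.dR^2
    positivity
  · show ξ.dL*ξ.dR < 0
    exact mul_neg_of_neg_of_pos hdL hdR
  · rw [hiter]; exact hphi1
  · rw [hiter2]; exact hphi2
  · exact hal2
end
end

section
/- Let ξ ∈ Φ with φ_min(ξ) > 0 and λ_L^s = λ_R^s; write λ = λ_R^s. Define γ : ℝ → ℝ² by γ(z) = (z/(1 − λ), (1 − z)·λ/(1 − λ)), and let Γ = {γ(z) : z ∈ [λ_R^u + 1, 1]}. Then: (i) γ(1) = T = (1/(1 − λ_R^s), 0) and γ(λ_R^u + 1) = f_ξ(T), so Γ is the line segment from T to f_ξ(T); (ii) for every z ∈ [λ_R^u + 1, 1], f_ξ(γ(z)) = γ(s_{λ_L^u, λ_R^u}(z)), where s_{λ_L^u, λ_R^u} is the skew tent map with parameters (λ_L^u, λ_R^u); and (iii) f_ξ(Γ) ⊆ Γ, i.e. f_ξ is forward invariant on Γ. -/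
noncomputable section

/-!
Since `λ_L^s = λ_R^s = λ`, both linear pieces of `f_ξ` have the unstable eigenvector `(1, -λ)`,
so the line `γ` through `T` in that direction is mapped into itself, with `f_ξ` acting on the
parameter `z` as the skew tent map with slopes `λ_L^u`, `λ_R^u`. The factorisation
`φ⁻ = (λ_L^u - λ) (λ_L^u λ_R^u + λ_L^u - λ_R^u)` together with `φ_min > 0` makes
`[λ_R^u + 1, 1]` invariant under that tent map.
-/

open Set Function

theorem stm_one (a b : ℝ) : stm a b 1 = b + 1 := by
  simp [stm]

theorem stm_mapsTo_Icc {a b : ℝ} (ha : 0 ≤ a) (hb : b ≤ 0) (hab : 0 ≤ a * b + a - b) :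
    MapsTo (stm a b) (Icc (b + 1) 1) (Icc (b + 1) 1) := by
  rintro z ⟨hz₁, hz₂⟩
  unfold stm
  split_ifs with hz
  · have : a * (b + 1) ≤ a * z := mul_le_mul_of_nonneg_left hz₁ ha
    constructor <;> nlinarith
  · constructor <;> nlinarith

/-- The line through `(1 / (1 - lam), 0)` in direction `(1, -lam)`, parametrised so that its
first coordinate has the sign of `z` when `lam < 1`. -/
def lineParam (lam z : ℝ) : ℝ × ℝ := (z / (1 - lam), (1 - z) * lam / (1 - lam))

theorem lineParam_one (lam : ℝ) : lineParam lam 1 = (1 / (1 - lam), 0) := by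
  simp [lineParam]

/-- A linear piece with eigenvalues `a` and `lam` moves the line parameter by `z ↦ a z + 1`. -/
theorem piece_lineParam {lam : ℝ} (hlam : lam ≠ 1) (a z : ℝ) :
    ((a + lam) * (lineParam lam z).1 + (lineParam lam z).2 + 1, -(a * lam) * (lineParam lam z).1)
      = lineParam lam (a * z + 1) := by
  have : 1 - lam ≠ 0 := sub_ne_zero.mpr hlam.symm
  simp only [lineParam, Prod.mk.injEq]
  constructor <;> field_simp <;> ring

theorem fBC_lineParam {ξ : Param} {u v lam : ℝ} (hlam : lam < 1)
    (htL : ξ.tL = u + lam) (hdL : ξ.dL = u * lam) (htR : ξ.tR = v + lam) (hdR : ξ.dR = v * lam)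
    (z : ℝ) : fBC ξ (lineParam lam z) = lineParam lam (stm u v z) := by
  have hden : 0 < 1 - lam := sub_pos.mpr hlam
  have hsign : (lineParam lam z).1 ≤ 0 ↔ z ≤ 0 := by rw [lineParam, div_le_iff₀ hden, zero_mul]
  rw [fBC, stm, htL, hdL, htR, hdR]
  by_cases hz : z ≤ 0
  · rw [if_pos (hsign.mpr hz), if_pos hz, piece_lineParam hlam.ne]
  · rw [if_neg (mt hsign.mp hz), if_neg hz, piece_lineParam hlam.ne]

section Eigenvalues

variable (ξ : Param)

theorem lamLs_le_lamLu : lamLs ξ ≤ lamLu ξ := by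
  unfold lamLs lamLu
  linarith [Real.sqrt_nonneg (ξ.tL ^ 2 - 4 * ξ.dL)]

theorem lamLu_add_lamLs : lamLu ξ + lamLs ξ = ξ.tL := by
  unfold lamLu lamLs; ring

theorem lamLu_mul_lamLs (h : 4 * ξ.dL ≤ ξ.tL ^ 2) : lamLu ξ * lamLs ξ = ξ.dL := by
  unfold lamLu lamLs
  linear_combination (-1 / 4 : ℝ) * Real.sq_sqrt (sub_nonneg.mpr h)

theorem lamRu_add_lamRs : lamRu ξ + lamRs ξ = ξ.tR := by
  unfold lamRu lamRs; ring

theorem lamRu_mul_lamRs (h : 4 * ξ.dR ≤ ξ.tR ^ 2) : lamRu ξ * lamRs ξ = ξ.dR := by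
  unfold lamRu lamRs
  linear_combination (-1 / 4 : ℝ) * Real.sq_sqrt (sub_nonneg.mpr h)

theorem phiMinus_eq (h : 4 * ξ.dR ≤ ξ.tR ^ 2) :
    phiMinus ξ = (lamLu ξ - lamRs ξ) * (lamLu ξ * lamRu ξ + lamLu ξ - lamRu ξ) := by
  rw [phiMinus, ← lamRu_add_lamRs, ← lamRu_mul_lamRs ξ h]
  ring

variable {ξ}

theorem Phi.four_mul_dL_lt_sq_tL (hξ : Phi ξ) : 4 * ξ.dL < ξ.tL ^ 2 := by
  have h := sq_lt_sq' (by linarith [hξ.1, abs_nonneg (ξ.dL + 1)]) hξ.1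
  nlinarith [sq_abs (ξ.dL + 1), sq_nonneg (ξ.dL - 1)]

theorem Phi.four_mul_dR_lt_sq_tR (hξ : Phi ξ) : 4 * ξ.dR < ξ.tR ^ 2 := by
  have h := sq_lt_sq' (by linarith [hξ.2, abs_nonneg (ξ.dR + 1)]) (lt_neg_of_lt_neg hξ.2)
  nlinarith [sq_abs (ξ.dR + 1), sq_nonneg (ξ.dR - 1)]

theorem Phi.lamLu_pos (hξ : Phi ξ) : 0 < lamLu ξ := by
  unfold lamLu
  linarith [hξ.1, abs_nonneg (ξ.dL + 1), Real.sqrt_nonneg (ξ.tL ^ 2 - 4 * ξ.dL)]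

theorem Phi.lamRu_neg (hξ : Phi ξ) : lamRu ξ < 0 := by
  unfold lamRu
  linarith [hξ.2, abs_nonneg (ξ.dR + 1), Real.sqrt_nonneg (ξ.tR ^ 2 - 4 * ξ.dR)]

theorem Phi.lamRs_lt_one (hξ : Phi ξ) : lamRs ξ < 1 := by
  have htR : ξ.tR < ξ.dR + 1 := by linarith [hξ.2, neg_abs_le (ξ.dR + 1)]
  have hsqrt : Real.sqrt (ξ.tR ^ 2 - 4 * ξ.dR) < 2 - ξ.tR :=
    (Real.sqrt_lt' (by linarith [hξ.2, abs_nonneg (ξ.dR + 1)])).mpr (by nlinarith)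
  unfold lamRs
  linarith

end Eigenvalues

theorem stmt_17 (ξ : Param) (hξ : Phi ξ) (hphi : 0 < phiMin ξ)
    (heig : lamLs ξ = lamRs ξ) :
    let lam : ℝ := lamRs ξ
    let γ : ℝ → ℝ × ℝ := fun z => (z / (1 - lam), (1 - z) * lam / (1 - lam))
    let Γ : Set (ℝ × ℝ) := γ '' Set.Icc (lamRu ξ + 1) 1
    γ 1 = (1 / (1 - lamRs ξ), 0) ∧
    γ (lamRu ξ + 1) = fBC ξ (1 / (1 - lamRs ξ), 0) ∧
    (∀ z ∈ Set.Icc (lamRu ξ + 1) 1,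
      fBC ξ (γ z) = γ (stm (lamLu ξ) (lamRu ξ) z)) ∧
    fBC ξ '' Γ ⊆ Γ := by
  intro lam γ Γ
  have hL := hξ.four_mul_dL_lt_sq_tL.le
  have hR := hξ.four_mul_dR_lt_sq_tR.le
  have hsemiconj : ∀ z, fBC ξ (γ z) = γ (stm (lamLu ξ) (lamRu ξ) z) :=
    fBC_lineParam hξ.lamRs_lt_one
      (by rw [← lamLu_add_lamLs, heig]) (by rw [← lamLu_mul_lamLs ξ hL, heig])
      (lamRu_add_lamRs ξ).symm (lamRu_mul_lamRs ξ hR).symm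
  have htent : 0 < lamLu ξ * lamRu ξ + lamLu ξ - lamRu ξ := by
    have hphiMinus : 0 < phiMinus ξ := hphi.trans_le (min_le_right _ _)
    rw [phiMinus_eq ξ hR, ← heig] at hphiMinus
    exact pos_of_mul_pos_right hphiMinus (sub_nonneg.mpr (lamLs_le_lamLu ξ))
  have hγ1 : γ 1 = (1 / (1 - lamRs ξ), 0) := lineParam_one lam
  refine ⟨hγ1, by rw [← hγ1, hsemiconj, stm_one], fun z _ => hsemiconj z, ?_⟩
  exact (Semiconj.mapsTo_image (fun z => (hsemiconj z).symm)
    (stm_mapsTo_Icc hξ.lamLu_pos.le hξ.lamRu_neg.le htent.le)).image_subset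
end
end
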